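/- arXiv:1507.05298 — 3 statements merged into one kernel-verified Lean document; each statement's English description precedes it below -/
import Mathlib

section
/- Under the setting of the previous statement, the strictly decreasing sequence (γ_k) has a limit γ* ∈ [0,1), and γ* satisfies γ* = exp(-(1-φ(γ*))/ρ). -/
/-!
The sequence `γ_k` is decreasing and bounded below by `0`, so it converges to some
`γ* ∈ [0, 1)`. Writing the fixed-point equation as `γ_k = ((1 + f(γ_k)/k)^k)⁻¹` with the
continuous function `f x = (1 - φ x)/ρ`, the exponents `k · f(γ_k)/k = f(γ_k)` tend to `f(γ*)`,
so the right-hand side tends to `exp(-f(γ*))` by the compound-interest limit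
`(1 + t_k/k)^k → exp t`, and uniqueness of limits gives `γ* = exp(-f(γ*))`.
-/

open Filter Real Set Topology

lemma exists_tendsto_mem_Ico_of_antitone_of_mem_Ioo {γ : ℕ → ℝ}
    (hmem : ∀ k, 1 ≤ k → γ k ∈ Ioo 0 1) (hanti : ∀ k, 1 ≤ k → γ (k + 1) ≤ γ k) :
    ∃ γs ∈ Ico (0 : ℝ) 1, Tendsto γ atTop (𝓝 γs) := by
  set δ : ℕ → ℝ := fun k => γ (k + 1)
  have hδ_anti : Antitone δ := antitone_nat_of_succ_le fun k => hanti (k + 1) (by omega)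
  have hδ_nonneg : ∀ k, 0 ≤ δ k := fun k => (hmem (k + 1) (by omega)).1.le
  have hδ_bdd : BddBelow (range δ) := ⟨0, by rintro _ ⟨k, rfl⟩; exact hδ_nonneg k⟩
  refine ⟨⨅ k, δ k, ⟨le_ciInf hδ_nonneg, ?_⟩, ?_⟩
  · exact (ciInf_le hδ_bdd 0).trans_lt (hmem 1 le_rfl).2
  · exact (tendsto_add_atTop_iff_nat 1).mp (tendsto_atTop_ciInf hδ_anti hδ_bdd)

lemma eq_exp_neg_of_tendsto_of_inv_eq_one_add_div_pow {γ : ℕ → ℝ} {γs : ℝ} {f : ℝ → ℝ}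
    (hγ : Tendsto γ atTop (𝓝 γs)) (hf : ContinuousAt f γs)
    (hfix : ∀ᶠ k : ℕ in atTop, (γ k)⁻¹ = (1 + f (γ k) / k) ^ k) :
    γs = exp (-f γs) := by
  have hpow : Tendsto (fun k : ℕ => (1 + f (γ k) / k) ^ k) atTop (𝓝 (exp (f γs))) := by
    refine tendsto_one_add_pow_exp_of_tendsto ((hf.tendsto.comp hγ).congr' ?_)
    filter_upwards [eventually_ne_atTop 0] with k hk
    exact (mul_div_cancel₀ _ (Nat.cast_ne_zero.mpr hk)).symm
  have hinv : Tendsto (fun k => (γ k)⁻¹⁻¹) atTop (𝓝 (exp (f γs))⁻¹) :=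
    (hpow.congr' (hfix.mono fun _ h => h.symm)).inv₀ (exp_pos _).ne'
  rw [← exp_neg] at hinv
  exact tendsto_nhds_unique hγ (by simpa only [inv_inv] using hinv)

theorem stmt9_general (b : ℕ) (p : ℕ → ℝ)
    (φ : ℝ → ℝ) (hφ : ∀ γ, φ γ = ∑ j ∈ Finset.Icc 1 b, p j * γ ^ j)
    (ρ : ℝ)
    (γ : ℕ → ℝ)
    (hmem : ∀ k, 1 ≤ k → γ k ∈ Set.Ioo (0 : ℝ) 1)
    (hfix : ∀ k, 1 ≤ k → 1 / γ k = (1 + (1 - φ (γ k)) / ((k : ℝ) * ρ)) ^ k)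
    (hdec : ∀ k, 1 ≤ k → γ (k + 1) < γ k) :
    ∃ γs : ℝ, γs ∈ Set.Ico (0 : ℝ) 1 ∧
      Filter.Tendsto γ Filter.atTop (nhds γs) ∧
      γs = Real.exp (-(1 - φ γs) / ρ) := by
  obtain ⟨γs, hγs_mem, hγ⟩ :=
    exists_tendsto_mem_Ico_of_antitone_of_mem_Ioo hmem fun k hk => (hdec k hk).le
  have hφ_cont : Continuous φ := by
    rw [funext hφ]
    fun_prop
  refine ⟨γs, hγs_mem, hγ, ?_⟩
  rw [neg_div]
  refine eq_exp_neg_of_tendsto_of_inv_eq_one_add_div_pow (f := fun x => (1 - φ x) / ρ) hγ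
    ((continuous_const.sub hφ_cont).div_const ρ).continuousAt ?_
  filter_upwards [eventually_ge_atTop 1] with k hk
  rw [← one_div, hfix k hk, mul_comm, div_div]

/-- The strictly decreasing sequence `γ_k` has a limit `γ* ∈ [0,1)` which
satisfies `γ* = exp(-(1-φ(γ*))/ρ)`. -/
theorem stmt9 (b : ℕ) (p : ℕ → ℝ) (hp : ∀ j, 0 ≤ p j)
    (hsum : ∑ j ∈ Finset.Icc 1 b, p j = 1)
    (φ : ℝ → ℝ) (hφ : ∀ γ, φ γ = ∑ j ∈ Finset.Icc 1 b, p j * γ ^ j)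
    (ρ : ℝ) (hρ : 0 < ρ)
    (γ : ℕ → ℝ)
    (hmem : ∀ k, 1 ≤ k → γ k ∈ Set.Ioo (0 : ℝ) 1)
    (hfix : ∀ k, 1 ≤ k → 1 / γ k = (1 + (1 - φ (γ k)) / ((k : ℝ) * ρ)) ^ k)
    (hdec : ∀ k, 1 ≤ k → γ (k + 1) < γ k) :
    ∃ γs : ℝ, γs ∈ Set.Ico (0 : ℝ) 1 ∧
      Filter.Tendsto γ Filter.atTop (nhds γs) ∧
      γs = Real.exp (-(1 - φ γs) / ρ) :=
  stmt9_general b p φ hφ ρ γ hmem hfix hdec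
end

section
/- Let φ(γ) = ∑_{j=1}^b p_j γ^j be a pgf and ρ > 0. Define h(γ) = (1+γ)/(1-γ) - ρ/(1-φ(γ)). Suppose γ* ∈ (0,1) satisfies (1-φ(γ*))/ρ ≥ 1-γ*. Then h is (weakly) increasing on [γ*, 1), i.e., h'(γ) ≥ 0 for γ ∈ [γ*, 1). -/
/-!
Since `∑ p_j = 1`, the geometric-sum identity factors `1 - φ(γ) = (1 - γ) A(γ)` with
`A(γ) = ∑_j p_j ∑_{i<j} γ^i`, which is nondecreasing on `[0, ∞)`. Then
`h(γ) = (2 - ρ / A(γ)) / (1 - γ) - 1`. The hypothesis at `γ*` says exactly `ρ ≤ A(γ*)`, so on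
`[γ*, 1)` the numerator `2 - ρ / A` is nonnegative and nondecreasing, while `1 / (1 - γ)` is
positive and increasing.
-/

open Finset

theorem one_sub_sum_mul_pow_eq {R : Type*} [CommRing R] (s : Finset ℕ) (p : ℕ → R)
    (hsum : ∑ j ∈ s, p j = 1) (x : R) :
    1 - ∑ j ∈ s, p j * x ^ j = (1 - x) * ∑ j ∈ s, p j * ∑ i ∈ range j, x ^ i := by
  conv_lhs => rw [← hsum]
  rw [← sum_sub_distrib, mul_sum]
  refine sum_congr rfl fun j _ => ?_
  rw [mul_left_comm, mul_neg_geom_sum, mul_sub, mul_one]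

theorem monotoneOn_sum_mul_geom_sum (s : Finset ℕ) {p : ℕ → ℝ} (hp : ∀ j ∈ s, 0 ≤ p j) :
    MonotoneOn (fun x : ℝ => ∑ j ∈ s, p j * ∑ i ∈ range j, x ^ i) (Set.Ici 0) := by
  intro x hx y _ hxy
  dsimp only
  gcongr with j hj
  exact hp j hj

theorem monotoneOn_one_add_div_one_sub_sub_div {f : ℝ → ℝ} {s : Set ℝ} {ρ : ℝ}
    (hf : MonotoneOn f s) (hs : s ⊆ Set.Iio 1) (hρ : 0 < ρ) (hfρ : ∀ x ∈ s, ρ ≤ 2 * f x) :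
    MonotoneOn (fun x => (1 + x) / (1 - x) - ρ / ((1 - x) * f x)) s := by
  have hrw : ∀ x ∈ s,
      (1 + x) / (1 - x) - ρ / ((1 - x) * f x) = (2 - ρ / f x) / (1 - x) - 1 := by
    intro x hx
    have : 1 - x ≠ 0 := (sub_pos.2 (hs hx)).ne'
    have : f x ≠ 0 := by linarith [hfρ x hx]
    field_simp
    ring
  intro x hx y hy hxy
  have hfx : 0 < f x := by linarith [hfρ x hx]
  have hfxy : f x ≤ f y := hf hx hy hxy
  simp only [hrw x hx, hrw y hy, sub_le_sub_iff_right]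
  apply div_le_div₀
  · rw [sub_nonneg, div_le_iff₀ (hfx.trans_le hfxy)]
    exact hfρ y hy
  · gcongr
  · exact sub_pos.2 (hs hy)
  · linarith

/-- If `(1-φ(γ*))/ρ ≥ 1-γ*`, then `h(γ) = (1+γ)/(1-γ) - ρ/(1-φ(γ))` is
weakly increasing on `[γ*, 1)`. -/
theorem stmt13 (b : ℕ) (p : ℕ → ℝ) (hp : ∀ j, 0 ≤ p j)
    (hsum : ∑ j ∈ Finset.Icc 1 b, p j = 1)
    (φ : ℝ → ℝ) (hφ : ∀ γ, φ γ = ∑ j ∈ Finset.Icc 1 b, p j * γ ^ j)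
    (ρ : ℝ) (hρ : 0 < ρ)
    (γs : ℝ) (hγs : γs ∈ Set.Ioo (0 : ℝ) 1)
    (hineq : (1 - φ γs) / ρ ≥ 1 - γs) :
    MonotoneOn (fun γ => (1 + γ) / (1 - γ) - ρ / (1 - φ γ)) (Set.Ico γs 1) := by
  set A : ℝ → ℝ := fun x => ∑ j ∈ Icc 1 b, p j * ∑ i ∈ range j, x ^ i
  have hA : MonotoneOn A (Set.Ici 0) := monotoneOn_sum_mul_geom_sum _ fun j _ => hp j
  have hfac : ∀ γ, 1 - φ γ = (1 - γ) * A γ := fun γ => by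
    rw [hφ, one_sub_sum_mul_pow_eq _ _ hsum]
  have hρA : ρ ≤ A γs := by
    rw [hfac, ge_iff_le, le_div_iff₀ hρ] at hineq
    exact le_of_mul_le_mul_left hineq (sub_pos.2 hγs.2)
  have hIco : Set.Ico γs 1 ⊆ Set.Ici 0 := fun x hx => hγs.1.le.trans hx.1
  simp only [hfac]
  refine monotoneOn_one_add_div_one_sub_sub_div (hA.mono hIco) (fun x hx => hx.2) hρ
    fun x hx => ?_
  linarith [hA (hIco (Set.left_mem_Ico.2 hγs.2)) (hIco hx) hx.1]
end

section
/- Fix ρ ∈ (0,1). For each positive integer k, define f_k(x) = (1/(kρ))x^{k+1} - (1 + 1/(kρ))x + 1 (corresponding to λ_k = kρμ with μ normalized to 1, i.e., μ/λ_k = 1/(kρ)). Then for all x ∈ (0,1) and all k ≥ 1: f_{k+1}(x) - f_k(x) = (1/(k(k+1)ρ)) x (1-x)² ∑_{i=1}^k i x^{i-1}, and in particular f_{k+1}(x) > f_k(x) on (0,1). -/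
/-! Multiplying `∑_{i=1}^k i x^{i-1}`, the derivative of the geometric sum, by `(1 - x)²` telescopes
to `1 - (k+1) x^k + k x^{k+1}`; in terms of this closed form the difference `f_{k+1} - f_k` is a
rational identity in `k` and `ρ`, and every factor of the right-hand side is positive on `(0,1)`. -/

open Finset

theorem one_sub_sq_mul_sum_Icc_mul_pow {R : Type*} [CommRing R] (x : R) (k : ℕ) :
    (1 - x) ^ 2 * ∑ i ∈ Icc 1 k, (i : R) * x ^ (i - 1)
      = 1 - ((k : R) + 1) * x ^ k + (k : R) * x ^ (k + 1) := by
  induction k with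
  | zero => simp
  | succ n ih =>
    rw [sum_Icc_succ_top (by omega), mul_add, ih, Nat.add_sub_cancel]
    push_cast
    ring

theorem sum_Icc_mul_pow_pos {R : Type*} [CommSemiring R] [PartialOrder R]
    [IsStrictOrderedRing R] {x : R} (hx : 0 ≤ x) {k : ℕ} (hk : 1 ≤ k) :
    0 < ∑ i ∈ Icc 1 k, (i : R) * x ^ (i - 1) := by
  have h1 : (1 : R) ≤ ∑ i ∈ Icc 1 k, (i : R) * x ^ (i - 1) := by
    simpa using single_le_sum (f := fun i : ℕ => (i : R) * x ^ (i - 1))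
      (fun i _ => by positivity) (mem_Icc.mpr ⟨le_rfl, hk⟩)
  exact zero_lt_one.trans_le h1

/-- The polynomial identity
`f_{k+1}(x) - f_k(x) = (1/(k(k+1)ρ)) x (1-x)² ∑_{i=1}^k i x^{i-1}`,
with `f_k(x) = (1/(kρ)) x^{k+1} - (1 + 1/(kρ)) x + 1`; in particular
`f_{k+1}(x) > f_k(x)` on `(0,1)`. -/
theorem stmt14 (ρ : ℝ) (hρ : ρ ∈ Set.Ioo (0 : ℝ) 1)
    (f : ℕ → ℝ → ℝ)
    (hf : ∀ k x, f k x =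
      (1 / ((k : ℝ) * ρ)) * x ^ (k + 1) - (1 + 1 / ((k : ℝ) * ρ)) * x + 1) :
    ∀ k, 1 ≤ k → ∀ x ∈ Set.Ioo (0 : ℝ) 1,
      (f (k + 1) x - f k x =
        (1 / ((k : ℝ) * ((k : ℝ) + 1) * ρ)) * x * (1 - x) ^ 2 *
          ∑ i ∈ Finset.Icc 1 k, (i : ℝ) * x ^ (i - 1)) ∧
      f k x < f (k + 1) x := by
  intro k hk x ⟨hx0, hx1⟩
  have hk0 : (0 : ℝ) < k := by exact_mod_cast hk
  have hdiff : f (k + 1) x - f k x =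
      (1 / ((k : ℝ) * ((k : ℝ) + 1) * ρ)) * x * (1 - x) ^ 2 *
        ∑ i ∈ Finset.Icc 1 k, (i : ℝ) * x ^ (i - 1) := by
    rw [hf, hf, mul_assoc _ ((1 - x) ^ 2), one_sub_sq_mul_sum_Icc_mul_pow]
    push_cast
    field_simp [hρ.1.ne']
    ring
  refine ⟨hdiff, sub_pos.mp ?_⟩
  have hsum := sum_Icc_mul_pow_pos hx0.le hk
  have hρ0 := hρ.1
  have h1x : 0 < 1 - x := sub_pos.mpr hx1
  rw [hdiff]
  positivity
end
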